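/- Fix 𝗑 ∈ ℝ and γ ∈ ℝ, set x_τ := −τ + (π^{1/4}/√2)·𝗑·τ^{1/2} and Φ_τ(ξ) := −(τ/3)ξ³ + x_τ·ξ − Q(ξ), and take the kernel K_z at parameters (τ, γ, x_τ). There exists δ ∈ (0, 1) such that for every δ₁ ∈ (0, δ) there are constants τ₀ > 0 and C > 0 with: Σ_{k=1}^{N} |K_z(ξ, u_{ℓ_k}(z))|² ≤ C·(log N)·e^{2·Re Φ_τ(ξ) + 0.9468·τ} for all ξ ∈ 𝒮₋(z), all integers N ≥ 2, all pairwise distinct integers ℓ₁, …, ℓ_N, all τ ≥ τ₀, and all z ∈ ℂ with 1 − δ ≤ |z| ≤ 1 − δ₁. -/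

import Mathlib

open MeasureTheory Filter Topology

noncomputable section

/-- θ_k(z) = −2·Arg z + 4πk. -/
def thetaK (z : ℂ) (k : ℤ) : ℝ := -(2 * Complex.arg z) + 4 * Real.pi * (k : ℝ)

/-- The Bethe roots u_k(z) = −(−2·log|z| + i·θ_k(z))^{1/2} (principal branch). -/
def uK (z : ℂ) (k : ℤ) : ℂ :=
  -((((-2 * Real.log ‖z‖ : ℝ) : ℂ) + Complex.I * ((thetaK z k : ℝ) : ℂ)) ^ ((1 : ℂ) / 2))

/-- Q(ξ) = −(1/π) ∫ℝ log(1 − e^{−ξ²/2} e^{−t²/2})/(i·t − ξ) dt. -/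
def Qf (ξ : ℂ) : ℂ :=
  -(1 / (Real.pi : ℂ)) *
    ∫ t : ℝ, Complex.log (1 - Complex.exp (-ξ ^ 2 / 2) * Complex.exp (-((t : ℂ) ^ 2) / 2)) /
      (Complex.I * (t : ℂ) - ξ)

/-- Φ(ξ) = −(τ/3)ξ³ + x·ξ − Q(ξ). -/
def PhiF (τ x : ℝ) (ξ : ℂ) : ℂ := -((τ : ℂ) / 3) * ξ ^ 3 + (x : ℂ) * ξ - Qf ξ

/-- The discrete kernel K_z. -/
def Kz (z : ℂ) (τ γ x : ℝ) (ξ₁ ξ₂ : ℂ) : ℂ :=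
  ∑' k : ℤ,
    Complex.exp (PhiF τ x ξ₁ + PhiF τ x (uK z k) + ((γ : ℂ) / 2) * (ξ₁ ^ 2 - (uK z k) ^ 2)) /
      (ξ₁ * uK z k * (ξ₁ + uK z k) * (uK z k + ξ₂))

/-- N-th term of the Fredholm series of K_z. -/
def fredTermK (z : ℂ) (τ γ x : ℝ) (N : ℕ) : ℂ :=
  ∑' ℓ : Fin N → ℤ,
    Matrix.det (Matrix.of (fun i j : Fin N => Kz z τ γ x (uK z (ℓ i)) (uK z (ℓ j))))

/-- The Fredholm determinant det(𝕀 − K_z). -/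
def fredDetK (z : ℂ) (τ γ x : ℝ) : ℂ :=
  1 + ∑' N : ℕ, ((-1 : ℂ) ^ (N + 1) / (Nat.factorial (N + 1) : ℂ)) * fredTermK z τ γ x (N + 1)

/-- Polylogarithm Li_s(w) = Σ_{k≥1} w^k/k^s. -/
def Li (s : ℝ) (w : ℂ) : ℂ := ∑' k : ℕ, w ^ (k + 1) / ((((k : ℝ) + 1) ^ s : ℝ) : ℂ)

def A1 (z : ℂ) : ℂ := -Li (3 / 2) z / (Real.sqrt (2 * Real.pi) : ℂ)

def A2 (z : ℂ) : ℂ := -Li (5 / 2) z / (Real.sqrt (2 * Real.pi) : ℂ)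

def Bf (z : ℂ) : ℂ :=
  (1 / (4 * (Real.pi : ℂ))) * ∫ t in (0 : ℝ)..1, (Li (1 / 2) ((t : ℂ) * z)) ^ 2 / (t : ℂ)

/-- The point z = R·e^{iθ}. -/
def circlePt (R θ : ℝ) : ℂ := (R : ℂ) * Complex.exp (Complex.I * (θ : ℂ))

/-- The limiting one-point distribution F(x; τ, γ) for step initial condition. -/
def Fstep (R τ γ x : ℝ) : ℂ :=
  (1 / (2 * (Real.pi : ℂ))) *
    ∫ θ in (0 : ℝ)..(2 * Real.pi),
      Complex.exp ((x : ℂ) * A1 (circlePt R θ) + (τ : ℂ) * A2 (circlePt R θ) +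
          2 * Bf (circlePt R θ)) * fredDetK (circlePt R θ) τ γ x

/-- x_τ = −τ + (π^{1/4}/√2)·𝗑·τ^{1/2}. -/
def xTau (x τ : ℝ) : ℝ := -τ + (Real.pi ^ ((1 : ℝ) / 4) / Real.sqrt 2) * x * Real.sqrt τ

/-- The trace Tr K_z = Σ_{k∈ℤ} K_z(u_k, u_k). -/
def trK (z : ℂ) (τ γ x : ℝ) : ℂ := ∑' k : ℤ, Kz z τ γ x (uK z k) (uK z k)

/-!
Write `s = -2 log ‖z‖` and `p_k = -Re u_k`. From `u_k² = s + iθ_k` and `|θ_k| ≥ 2π|k|` one gets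
`p_k² ≥ s` and `p_k² ≥ π|k|`, and `Re Φ_τ(u_k) = τ (s p - (2/3) p³) + τ p - c 𝗑 √τ p - Re Q(u_k)`
with `p = p_k`, `c = π^{1/4}/√2`. Since `|log (1 - w)| ≤ |w| / (1 - |w|)` and `|e^{-u_k²/2}| = |z|`,
a Gaussian integral gives `|Q(u_k)| ≤ 1 / ((1 - |z|) p_k)`. For `s ≤ 1/1000` and `τ` large, the
terms `τ s p` and `c 𝗑 √τ p + p` are each absorbed into `τ p / 1000`, so the cubic wins:
`Re Φ_τ(u_m) ≤ 0.4734 τ - √(π|m|) + O_{δ₁}(1)`. Bounding the series for `K_z(u_j, u_l)` term by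
term, with denominators at least `2 s₁^{3/2} p_l` where `s₁ = -2 log (1 - δ₁)`, gives
`|K_z(u_j, u_l)| ≲ e^{Re Φ_τ(u_j) + 0.4734 τ} / p_l`. Finally `1/p_n² ≤ (1 + 1/s₁) / (|n| + 1)`,
and `1/(|n| + 1)` summed over `N` distinct integers is `O(log N)`.
-/

theorem Complex.norm_log_one_sub_le {c : ℂ} (hc : ‖c‖ < 1) :
    ‖Complex.log (1 - c)‖ ≤ ‖c‖ / (1 - ‖c‖) := by
  have h := Complex.norm_log_one_add_le (z := -c) (by rwa [norm_neg])
  rw [norm_neg, ← sub_eq_add_neg] at h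
  refine h.trans ?_
  have h1 : 0 < 1 - ‖c‖ := by linarith
  rw [le_div_iff₀ h1]
  field_simp
  nlinarith [norm_nonneg c]

theorem Complex.neg_re_le_norm (w : ℂ) : -w.re ≤ ‖w‖ := by
  simpa using Complex.re_le_norm (-w)

theorem Complex.re_cpow_one_half_pos {w : ℂ} (hw : 0 < w.re) : 0 < (w ^ (1 / 2 : ℂ)).re := by
  have hw0 : w ≠ 0 := fun h => by simp [h] at hw
  have harg : |w.arg| < Real.pi / 2 := Complex.abs_arg_lt_pi_div_two_iff.mpr (Or.inl hw)
  rw [Complex.cpow_def_of_ne_zero hw0, Complex.exp_re]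
  refine mul_pos (Real.exp_pos _) (Real.cos_pos_of_mem_Ioo ?_)
  have him : (Complex.log w * (1 / 2)).im = w.arg / 2 := by
    simp [Complex.log_im, div_eq_mul_inv]
  rw [him]
  constructor <;> linarith [abs_lt.mp harg, Real.pi_pos]

theorem le_norm_mul_mul_add_mul_add {ξ₁ ξ₂ ξ₃ : ℂ} {r : ℝ} (hr : 0 ≤ r) (h₁ : r ≤ -ξ₁.re)
    (h₂ : r ≤ -ξ₂.re) (h₃ : 0 ≤ -ξ₃.re) :
    2 * r ^ 3 * -ξ₃.re ≤ ‖ξ₁ * ξ₂ * (ξ₁ + ξ₂) * (ξ₂ + ξ₃)‖ := by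
  have h₁₂ := Complex.neg_re_le_norm (ξ₁ + ξ₂)
  have h₂₃ := Complex.neg_re_le_norm (ξ₂ + ξ₃)
  simp only [Complex.add_re] at h₁₂ h₂₃
  calc 2 * r ^ 3 * -ξ₃.re = r * r * (r + r) * -ξ₃.re := by ring
    _ ≤ ‖ξ₁‖ * ‖ξ₂‖ * ‖ξ₁ + ξ₂‖ * ‖ξ₂ + ξ₃‖ := by
      gcongr
      · exact h₁.trans (Complex.neg_re_le_norm ξ₁)
      · exact h₂.trans (Complex.neg_re_le_norm ξ₂)
      · linarith
      · linarith
    _ = _ := by simp only [norm_mul]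

theorem Real.exp_neg_le_div_pow_four {y : ℝ} (hy : 0 < y) : Real.exp (-y) ≤ 24 / y ^ 4 := by
  have := Real.pow_div_factorial_le_exp (x := y) hy.le 4
  rw [Real.exp_neg, inv_le_comm₀ (Real.exp_pos y) (by positivity), inv_div]
  simpa [Nat.factorial] using this

theorem summable_exp_neg_sqrt_pi_mul_abs :
    Summable fun m : ℤ => Real.exp (-Real.sqrt (Real.pi * |(m : ℝ)|)) := by
  refine Summable.of_norm_bounded_eventually
    ((Real.summable_one_div_int_pow.mpr one_lt_two).mul_left 24) ?_
  filter_upwards [eventually_cofinite_ne 0] with m hm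
  rw [Real.norm_of_nonneg (Real.exp_pos _).le]
  refine (Real.exp_neg_le_div_pow_four (by positivity)).trans ?_
  have h4 : Real.sqrt (Real.pi * |(m : ℝ)|) ^ 4 = (Real.pi * |(m : ℝ)|) ^ 2 := by
    rw [show (4 : ℕ) = 2 * 2 from rfl, pow_mul, Real.sq_sqrt (by positivity)]
  rw [h4, mul_one_div, mul_pow, sq_abs]
  have hpi : 1 ≤ Real.pi ^ 2 := by nlinarith [Real.pi_gt_three]
  gcongr
  nlinarith [sq_nonneg (m : ℝ)]

-- `(0 : ℝ)⁻¹ = 0`, so `0 ∈ S` costs nothing.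
open Finset in
theorem sum_inv_le_two_add_log {S : Finset ℕ} {N : ℕ} (hS : #S ≤ N) :
    ∑ m ∈ S, ((m : ℝ))⁻¹ ≤ 2 + Real.log N := by
  have hsmall : ∑ m ∈ S ∩ Icc 1 N, ((m : ℝ))⁻¹ ≤ 1 + Real.log N := by
    refine le_trans ?_ (harmonic_le_one_add_log N)
    rw [harmonic_eq_sum_Icc, Rat.cast_sum]
    push_cast
    exact sum_le_sum_of_subset_of_nonneg inter_subset_right (fun _ _ _ => by positivity)
  have hlarge : ∑ m ∈ S \ Icc 1 N, ((m : ℝ))⁻¹ ≤ 1 := by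
    calc ∑ m ∈ S \ Icc 1 N, ((m : ℝ))⁻¹ ≤ ∑ _m ∈ S \ Icc 1 N, ((N : ℝ))⁻¹ := by
          refine sum_le_sum fun m hm => ?_
          rw [Finset.mem_sdiff, Finset.mem_Icc] at hm
          rcases Nat.eq_zero_or_pos m with rfl | hm0
          · simp
          · have hN : (0 : ℝ) < N := by
              exact_mod_cast (card_pos.mpr ⟨m, hm.1⟩).trans_le hS
            exact inv_anti₀ hN (by exact_mod_cast (show N ≤ m by omega))
      _ ≤ N * ((N : ℝ))⁻¹ := by
          rw [sum_const, nsmul_eq_mul]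
          gcongr
          exact_mod_cast (card_le_card sdiff_subset).trans hS
      _ ≤ 1 := mul_inv_le_one
  rw [← sum_inter_add_sum_sdiff S (Icc 1 N)]
  linarith

open Finset in
theorem sum_inv_abs_add_one_le {T : Finset ℤ} {N : ℕ} (hT : #T ≤ N) :
    ∑ n ∈ T, (|(n : ℝ)| + 1)⁻¹ ≤ 2 * (2 + Real.log N) := by
  have hcast (n : ℤ) : (|(n : ℝ)| + 1)⁻¹ = (((n.natAbs + 1 : ℕ)) : ℝ)⁻¹ := by
    push_cast [Nat.cast_natAbs, Int.cast_abs]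
    rfl
  have half (p : ℤ → Prop) [DecidablePred p] (hinj : Set.InjOn (fun n => n.natAbs + 1) {n | p n}) :
      ∑ n ∈ T.filter p, (|(n : ℝ)| + 1)⁻¹ ≤ 2 + Real.log N := by
    simp_rw [hcast]
    rw [← sum_image (f := fun m : ℕ => ((m : ℝ))⁻¹) (s := T.filter p)
      (hinj.mono fun n hn => (mem_filter.mp hn).2)]
    exact sum_inv_le_two_add_log (card_image_le.trans ((card_filter_le _ _).trans hT))
  rw [← sum_filter_add_sum_filter_not T (0 ≤ ·), two_mul]
  gcongr
  · exact half _ fun a ha b hb h => by simp only [Set.mem_ofPred_eq] at ha hb h; omega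
  · exact half _ fun a ha b hb h => by simp only [Set.mem_ofPred_eq] at ha hb h; omega

-- The maximum of `(1 + ε) p - (2/3) p³` over `p ≥ 0` is `(√2/3)(1 + ε)^(3/2)`, about `0.47282` for
-- `ε = 0.002`; twice `0.4734` is the exponent `0.9468` of the theorem.
theorem cubic_le_of_nonneg {p : ℝ} (hp : 0 ≤ p) : 1.002 * p - 2 / 3 * p ^ 3 ≤ 0.4734 := by
  nlinarith [mul_nonneg (sq_nonneg (p - 0.7078)) hp, sq_nonneg (p - 0.7078)]

theorem mul_sqrt_add_one_le {c τ : ℝ} (hc : 0 ≤ c) (hτ : (1000 * (c + 1)) ^ 2 ≤ τ) :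
    c * Real.sqrt τ + 1 ≤ τ / 1000 := by
  have hsqrt : 1000 * (c + 1) ≤ Real.sqrt τ := Real.le_sqrt_of_sq_le hτ
  have hτ0 : 0 ≤ τ := (sq_nonneg _).trans hτ
  have := Real.mul_self_sqrt hτ0
  nlinarith

theorem neg_two_mul_log_le_of_le {y : ℝ} (hy : 1 - 1 / 4000 ≤ y) : -2 * Real.log y ≤ 1 / 1000 := by
  have h := Real.one_sub_inv_le_log_of_pos (by linarith : 0 < y)
  have : y⁻¹ ≤ (1 - 1 / 4000)⁻¹ := inv_anti₀ (by norm_num) hy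
  norm_num at this
  linarith

theorem neg_two_mul_log_one_sub_pos {d : ℝ} (hd : 0 < d) (hd₁ : d < 1) :
    0 < -2 * Real.log (1 - d) := by
  linarith [Real.log_neg (by linarith) (by linarith : 1 - d < 1)]

theorem two_add_log_le {N : ℝ} (hN : 2 ≤ N) :
    2 + Real.log N ≤ (2 / Real.log 2 + 1) * Real.log N := by
  have hlog2 : 0 < Real.log 2 := Real.log_pos one_lt_two
  have := Real.log_le_log two_pos hN
  have : 2 ≤ 2 / Real.log 2 * Real.log N := by
    rw [div_mul_eq_mul_div, le_div_iff₀ hlog2]; linarith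
  linarith

theorem sum_sq_le_of_le_div {ι : Type*} (s : Finset ι) {a : ℝ} {f p : ι → ℝ}
    (hf : ∀ i ∈ s, 0 ≤ f i) (h : ∀ i ∈ s, f i ≤ a / p i) :
    ∑ i ∈ s, f i ^ 2 ≤ a ^ 2 * ∑ i ∈ s, (p i ^ 2)⁻¹ := by
  rw [Finset.mul_sum]
  refine Finset.sum_le_sum fun i hi => ?_
  rw [← inv_pow, ← mul_pow, ← div_eq_mul_inv]
  exact pow_le_pow_left₀ (hf i hi) (h i hi) 2

theorem norm_Qf_le {u : ℂ} (hu : u.re < 0) {d : ℝ} (hd : 0 < d)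
    (hud : ‖Complex.exp (-u ^ 2 / 2)‖ ≤ 1 - d) : ‖Qf u‖ ≤ 1 / (d * -u.re) := by
  set g : ℝ → ℝ := fun t => Real.exp (-(1 / 2) * t ^ 2)
  have hg_le_one (t : ℝ) : g t ≤ 1 := Real.exp_le_one_iff.mpr (by nlinarith)
  have hintegrand (t : ℝ) :
      ‖Complex.log (1 - Complex.exp (-u ^ 2 / 2) * Complex.exp (-((t : ℂ) ^ 2) / 2)) /
        (Complex.I * (t : ℂ) - u)‖ ≤ g t / (d * -u.re) := by
    set c := Complex.exp (-u ^ 2 / 2) * Complex.exp (-((t : ℂ) ^ 2) / 2)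
    have hc : ‖c‖ ≤ (1 - d) * g t := by
      rw [norm_mul, Complex.norm_exp (-((t : ℂ) ^ 2) / 2)]
      have : (-((t : ℂ) ^ 2) / 2).re = -(1 / 2) * t ^ 2 := by
        norm_cast; ring
      rw [this]
      gcongr
    have h1d : 0 ≤ 1 - d := (norm_nonneg _).trans hud
    have hcg : ‖c‖ ≤ g t := hc.trans (by nlinarith [Real.exp_pos (-(1 / 2) * t ^ 2)])
    have hcd : d ≤ 1 - ‖c‖ := by nlinarith [mul_le_mul_of_nonneg_left (hg_le_one t) h1d]
    have hden : -u.re ≤ ‖Complex.I * (t : ℂ) - u‖ := by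
      simpa using Complex.re_le_norm (Complex.I * (t : ℂ) - u)
    calc _ = ‖Complex.log (1 - c)‖ / ‖Complex.I * (t : ℂ) - u‖ := norm_div _ _
      _ ≤ (‖c‖ / (1 - ‖c‖)) / -u.re :=
        div_le_div₀ (div_nonneg (norm_nonneg c) (by linarith))
          (Complex.norm_log_one_sub_le (by linarith)) (by linarith) hden
      _ ≤ (g t / d) / -u.re := by
        gcongr
        linarith
      _ = g t / (d * -u.re) := div_div _ _ _
  have hg_int : ∫ t, g t / (d * -u.re) = Real.sqrt (2 * Real.pi) / (d * -u.re) := by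
    rw [integral_div, integral_gaussian]
    norm_num [div_inv_eq_mul, mul_comm]
  have hsqrt : Real.sqrt (2 * Real.pi) ≤ Real.pi := by
    rw [Real.sqrt_le_left Real.pi_pos.le]
    nlinarith [Real.pi_gt_three]
  calc ‖Qf u‖
      = (1 / Real.pi) * ‖∫ t : ℝ, Complex.log (1 - Complex.exp (-u ^ 2 / 2) *
          Complex.exp (-((t : ℂ) ^ 2) / 2)) / (Complex.I * (t : ℂ) - u)‖ := by
        rw [Qf, norm_mul, norm_neg, norm_div, norm_one, Complex.norm_real,
          Real.norm_of_nonneg Real.pi_pos.le]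
    _ ≤ (1 / Real.pi) * (Real.sqrt (2 * Real.pi) / (d * -u.re)) := by
        gcongr
        rw [← hg_int]
        exact norm_integral_le_of_norm_le
          (((integrable_exp_neg_mul_sq (by norm_num)).div_const _)) (.of_forall hintegrand)
    _ ≤ 1 / (d * -u.re) := by
        rw [← mul_div_assoc, one_div_mul_eq_div]
        exact div_le_div_of_nonneg_right ((div_le_one Real.pi_pos).mpr hsqrt)
          (mul_pos hd (neg_pos.mpr hu)).le

theorem re_PhiF_eq {τ x s : ℝ} {u : ℂ} (hu : (u ^ 2).re = s) :
    (PhiF τ x u).re = τ / 3 * (2 * u.re ^ 3 - 3 * s * u.re) + x * u.re - (Qf u).re := by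
  have him : u.im ^ 2 = u.re ^ 2 - s := by
    rw [← hu, sq u, Complex.mul_re]; ring
  have h3 : (u ^ 3).re = u.re ^ 3 - 3 * u.re * u.im ^ 2 := by
    rw [pow_succ, sq, Complex.mul_re, Complex.mul_re, Complex.mul_im]; ring
  rw [PhiF, Complex.sub_re, Complex.add_re, Complex.re_ofReal_mul,
    show -((τ : ℂ) / 3) = ((-(τ / 3) : ℝ) : ℂ) by push_cast; ring, Complex.re_ofReal_mul, h3, him]
  ring

theorem uK_sq (z : ℂ) (k : ℤ) :
    uK z k ^ 2 = ((-2 * Real.log ‖z‖ : ℝ) : ℂ) + Complex.I * (thetaK z k : ℂ) := by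
  rw [uK, neg_sq, one_div, Complex.cpow_ofNat_inv_pow]

theorem re_uK_sq (z : ℂ) (k : ℤ) : (uK z k ^ 2).re = -2 * Real.log ‖z‖ := by
  simp [uK_sq]

theorem re_uK_sq_sub_im_sq (z : ℂ) (k : ℤ) :
    (uK z k).re ^ 2 - (uK z k).im ^ 2 = -2 * Real.log ‖z‖ := by
  rw [← re_uK_sq z k, sq (uK z k), Complex.mul_re]; ring

theorem two_mul_re_uK_mul_im (z : ℂ) (k : ℤ) :
    2 * ((uK z k).re * (uK z k).im) = thetaK z k := by
  rw [two_mul]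
  simpa [sq, Complex.mul_im, mul_comm] using congrArg Complex.im (uK_sq z k)

theorem re_uK_neg {z : ℂ} (hz : Real.log ‖z‖ < 0) (k : ℤ) : (uK z k).re < 0 := by
  rw [uK, Complex.neg_re, neg_lt_zero]
  exact Complex.re_cpow_one_half_pos (by simp; linarith)

theorem norm_exp_neg_uK_sq_div_two {z : ℂ} (hz : z ≠ 0) (k : ℤ) :
    ‖Complex.exp (-uK z k ^ 2 / 2)‖ = ‖z‖ := by
  rw [Complex.norm_exp, neg_div, Complex.neg_re, Complex.div_ofNat_re, re_uK_sq,
    show -(-2 * Real.log ‖z‖ / 2) = Real.log ‖z‖ by ring, Real.exp_log (norm_pos_iff.mpr hz)]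

theorem two_pi_mul_abs_le_abs_thetaK (z : ℂ) (k : ℤ) : 2 * Real.pi * |(k : ℝ)| ≤ |thetaK z k| := by
  rcases eq_or_ne k 0 with rfl | hk
  · simp
  have hk1 : (1 : ℝ) ≤ |(k : ℝ)| := by exact_mod_cast Int.one_le_abs hk
  have harg : |2 * z.arg| ≤ 2 * Real.pi := by
    rw [abs_mul, abs_two]
    gcongr
    exact Complex.abs_arg_le_pi z
  have := abs_sub_abs_le_abs_sub (4 * Real.pi * (k : ℝ)) (2 * z.arg)
  rw [abs_mul, abs_of_pos (by positivity : (0 : ℝ) < 4 * Real.pi)] at this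
  rw [thetaK, neg_add_eq_sub]
  nlinarith [Real.pi_pos]

theorem neg_two_mul_log_norm_le_re_uK_sq (z : ℂ) (k : ℤ) :
    -2 * Real.log ‖z‖ ≤ (uK z k).re ^ 2 := by
  nlinarith [re_uK_sq_sub_im_sq z k, sq_nonneg (uK z k).im]

theorem pi_mul_abs_le_re_uK_sq {z : ℂ} (hz : Real.log ‖z‖ ≤ 0) (k : ℤ) :
    Real.pi * |(k : ℝ)| ≤ (uK z k).re ^ 2 := by
  have hθ := two_pi_mul_abs_le_abs_thetaK z k
  rw [← two_mul_re_uK_mul_im, abs_mul, abs_two, abs_mul] at hθ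
  have hb : |(uK z k).im| ≤ |(uK z k).re| :=
    sq_le_sq.mp (by nlinarith [re_uK_sq_sub_im_sq z k])
  nlinarith [abs_nonneg (uK z k).im, sq_abs (uK z k).re]

theorem re_PhiF_xTau_uK_le {x τ d r : ℝ} {z : ℂ} (hz₀ : z ≠ 0) (hd : 0 < d) (hzd : ‖z‖ ≤ 1 - d)
    (hs : -2 * Real.log ‖z‖ ≤ 1 / 1000)
    (hτ : (1000 * (Real.pi ^ ((1 : ℝ) / 4) / Real.sqrt 2 * |x| + 1)) ^ 2 ≤ τ)
    (hr : 0 < r) {m : ℤ} (hp : r ≤ -(uK z m).re) :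
    (PhiF τ (xTau x τ) (uK z m)).re ≤
      0.4734 * τ + 1 / (d * r) - Real.sqrt (Real.pi * |(m : ℝ)|) := by
  set c₀ := Real.pi ^ ((1 : ℝ) / 4) / Real.sqrt 2
  set u := uK z m
  set p := -u.re with hp_def
  set s := -2 * Real.log ‖z‖
  have hlog : Real.log ‖z‖ ≤ 0 := Real.log_nonpos (norm_nonneg z) (by linarith)
  have hp0 : 0 < p := hr.trans_le hp
  have hQ : -(Qf u).re ≤ 1 / (d * r) := by
    have hnorm : ‖Qf u‖ ≤ 1 / (d * p) :=
      norm_Qf_le (by linarith) hd (by rw [norm_exp_neg_uK_sq_div_two hz₀]; exact hzd)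
    calc -(Qf u).re ≤ ‖Qf u‖ := Complex.neg_re_le_norm _
      _ ≤ 1 / (d * p) := hnorm
      _ ≤ 1 / (d * r) := by gcongr
  have hdecay : Real.sqrt (Real.pi * |(m : ℝ)|) ≤ p :=
    (Real.sqrt_le_left hp0.le).mpr (by rw [hp_def, neg_sq]; exact pi_mul_abs_le_re_uK_sq hlog m)
  have hc₀ : 0 ≤ c₀ * |x| := by positivity
  have hτ0 : 0 ≤ τ := (sq_nonneg _).trans hτ
  have hsp : τ * (s * p) ≤ τ * (p / 1000) :=
    mul_le_mul_of_nonneg_left (by nlinarith) hτ0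
  have habsorb : (c₀ * |x| * Real.sqrt τ + 1) * p ≤ τ / 1000 * p :=
    mul_le_mul_of_nonneg_right (mul_sqrt_add_one_le hc₀ hτ) hp0.le
  have hcubic : τ * (1.002 * p - 2 / 3 * p ^ 3) ≤ τ * 0.4734 :=
    mul_le_mul_of_nonneg_left (cubic_le_of_nonneg hp0.le) hτ0
  have hx : -(c₀ * x * Real.sqrt τ * p) ≤ c₀ * |x| * Real.sqrt τ * p := by
    have : 0 ≤ c₀ * Real.sqrt τ * p := by positivity
    nlinarith [neg_le_abs x]
  rw [re_PhiF_eq (re_uK_sq z m), xTau, show u.re = -p by rw [hp_def, neg_neg]]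
  nlinarith

theorem norm_Kz_uK_le {z : ℂ} {τ γ x r B : ℝ} (hr : 0 < r) (hp : ∀ k, r ≤ -(uK z k).re)
    (hΦ : ∀ m : ℤ, (PhiF τ x (uK z m)).re ≤ B - Real.sqrt (Real.pi * |(m : ℝ)|)) (j l : ℤ) :
    ‖Kz z τ γ x (uK z j) (uK z l)‖ ≤
      Real.exp ((PhiF τ x (uK z j)).re + B) *
        (∑' m : ℤ, Real.exp (-Real.sqrt (Real.pi * |(m : ℝ)|))) / (2 * r ^ 3 * -(uK z l).re) := by
  set E : ℤ → ℝ := fun m => Real.exp (-Real.sqrt (Real.pi * |(m : ℝ)|))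
  set A := Real.exp ((PhiF τ x (uK z j)).re + B) / (2 * r ^ 3 * -(uK z l).re)
  have hD : 0 < 2 * r ^ 3 * -(uK z l).re := mul_pos (by positivity) (hr.trans_le (hp l))
  have hterm (m : ℤ) :
      ‖Complex.exp (PhiF τ x (uK z j) + PhiF τ x (uK z m) +
          ((γ : ℂ) / 2) * (uK z j ^ 2 - uK z m ^ 2)) /
        (uK z j * uK z m * (uK z j + uK z m) * (uK z m + uK z l))‖ ≤ A * E m := by
    have hγ : (((γ : ℂ) / 2) * (uK z j ^ 2 - uK z m ^ 2)).re = 0 := by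
      rw [show (γ : ℂ) / 2 = ((γ / 2 : ℝ) : ℂ) by push_cast; ring, Complex.re_ofReal_mul,
        Complex.sub_re, re_uK_sq, re_uK_sq, sub_self, mul_zero]
    have hnum : Real.exp ((PhiF τ x (uK z j)).re + (PhiF τ x (uK z m)).re) ≤
        Real.exp ((PhiF τ x (uK z j)).re + B) * E m := by
      rw [← Real.exp_add, Real.exp_le_exp]
      linarith [hΦ m]
    rw [norm_div, Complex.norm_exp, Complex.add_re, Complex.add_re, hγ, add_zero]
    calc _ ≤ Real.exp ((PhiF τ x (uK z j)).re + B) * E m / (2 * r ^ 3 * -(uK z l).re) :=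
          div_le_div₀ (by positivity) hnum hD
            (le_norm_mul_mul_add_mul_add hr.le (hp j) (hp m) (hr.trans_le (hp l)).le)
      _ = A * E m := by ring
  have hsum : Summable fun m => A * E m := summable_exp_neg_sqrt_pi_mul_abs.mul_left A
  calc ‖Kz z τ γ x (uK z j) (uK z l)‖ ≤ ∑' m, A * E m :=
        tsum_of_norm_bounded hsum.hasSum hterm
    _ = _ := by rw [tsum_mul_left]; ring

theorem sqrt_le_neg_re_uK {z : ℂ} {s₁ : ℝ} (hs₁ : 0 < s₁) (hs : s₁ ≤ -2 * Real.log ‖z‖) (k : ℤ) :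
    Real.sqrt s₁ ≤ -(uK z k).re := by
  refine (Real.sqrt_le_left (neg_pos.mpr (re_uK_neg (by linarith) k)).le).mpr ?_
  rw [neg_sq]
  exact hs.trans (neg_two_mul_log_norm_le_re_uK_sq z k)

theorem sum_inv_re_uK_sq_le {z : ℂ} {s₁ : ℝ} (hs₁ : 0 < s₁) (hs : s₁ ≤ -2 * Real.log ‖z‖)
    {N : ℕ} {ℓ : Fin N → ℤ} (hℓ : Function.Injective ℓ) :
    ∑ k, ((-(uK z (ℓ k)).re) ^ 2)⁻¹ ≤ (1 + s₁⁻¹) * (2 * (2 + Real.log N)) := by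
  have hlog : Real.log ‖z‖ ≤ 0 := by linarith
  have hpoint (n : ℤ) : ((-(uK z n).re) ^ 2)⁻¹ ≤ (1 + s₁⁻¹) * (|(n : ℝ)| + 1)⁻¹ := by
    have hsa := neg_two_mul_log_norm_le_re_uK_sq z n
    have hna := pi_mul_abs_le_re_uK_sq hlog n
    have ha : 0 < (uK z n).re ^ 2 := hs₁.trans_le (hs.trans hsa)
    have h1 : 1 ≤ s₁⁻¹ * (uK z n).re ^ 2 := by
      rw [inv_mul_eq_div, le_div_iff₀ hs₁, one_mul]; linarith
    have h2 : |(n : ℝ)| ≤ (uK z n).re ^ 2 := by nlinarith [Real.pi_gt_three, abs_nonneg (n : ℝ)]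
    rw [neg_sq, inv_le_comm₀ ha (by positivity), mul_inv, inv_inv, inv_mul_le_iff₀ (by positivity)]
    linarith
  calc ∑ k, ((-(uK z (ℓ k)).re) ^ 2)⁻¹
      ≤ ∑ k, (1 + s₁⁻¹) * (|((ℓ k : ℤ) : ℝ)| + 1)⁻¹ := Finset.sum_le_sum fun k _ => hpoint (ℓ k)
    _ = (1 + s₁⁻¹) * ∑ n ∈ Finset.univ.image ℓ, (|(n : ℝ)| + 1)⁻¹ := by
      rw [Finset.sum_image hℓ.injOn, Finset.mul_sum]
    _ ≤ (1 + s₁⁻¹) * (2 * (2 + Real.log N)) := by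
      gcongr
      exact sum_inv_abs_add_one_le (Finset.card_image_le.trans (by simp))

def kernelConst (d : ℝ) : ℝ :=
  Real.exp (1 / (d * Real.sqrt (-2 * Real.log (1 - d)))) *
    (∑' m : ℤ, Real.exp (-Real.sqrt (Real.pi * |(m : ℝ)|))) /
      (2 * Real.sqrt (-2 * Real.log (1 - d)) ^ 3)

theorem kernelConst_pos {d : ℝ} (hd : 0 < d) (hd₁ : d < 1) : 0 < kernelConst d := by
  have := summable_exp_neg_sqrt_pi_mul_abs.tsum_pos (fun _ => (Real.exp_pos _).le) 0
    (Real.exp_pos _)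
  have := Real.sqrt_pos.mpr (neg_two_mul_log_one_sub_pos hd hd₁)
  unfold kernelConst
  positivity

theorem norm_Kz_xTau_uK_le {x γ τ d : ℝ} {z : ℂ} (hd : 0 < d) (hz : 1 - 1 / 4000 ≤ ‖z‖)
    (hzd : ‖z‖ ≤ 1 - d) (hτ : (1000 * (Real.pi ^ ((1 : ℝ) / 4) / Real.sqrt 2 * |x| + 1)) ^ 2 ≤ τ)
    (j l : ℤ) :
    ‖Kz z τ γ (xTau x τ) (uK z j) (uK z l)‖ ≤
      kernelConst d * Real.exp ((PhiF τ (xTau x τ) (uK z j)).re + 0.4734 * τ) / -(uK z l).re := by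
  have hz₀ : z ≠ 0 := norm_pos_iff.mp (by linarith)
  have hs₁ := neg_two_mul_log_one_sub_pos hd (by linarith)
  have hr := Real.sqrt_pos.mpr hs₁
  have hp := sqrt_le_neg_re_uK hs₁ (by linarith [Real.log_le_log (norm_pos_iff.mpr hz₀) hzd])
  have hΦ (m : ℤ) :=
    re_PhiF_xTau_uK_le hz₀ hd hzd (neg_two_mul_log_le_of_le hz) hτ hr (hp m)
  refine (norm_Kz_uK_le hr hp hΦ j l).trans_eq ?_
  rw [← add_assoc, Real.exp_add, kernelConst]
  ring

theorem statement13 (x γ : ℝ) :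
    ∃ δ ∈ Set.Ioo (0 : ℝ) 1, ∀ δ₁ ∈ Set.Ioo (0 : ℝ) δ, ∃ τ₀ > (0 : ℝ), ∃ C > (0 : ℝ),
      ∀ N : ℕ, 2 ≤ N → ∀ ℓ : Fin N → ℤ, Function.Injective ℓ →
        ∀ j : ℤ, ∀ τ : ℝ, τ₀ ≤ τ → ∀ z : ℂ, 1 - δ ≤ ‖z‖ → ‖z‖ ≤ 1 - δ₁ →
          ∑ k : Fin N, ‖Kz z τ γ (xTau x τ) (uK z j) (uK z (ℓ k))‖ ^ 2 ≤
            C * Real.log (N : ℝ) *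
              Real.exp (2 * (PhiF τ (xTau x τ) (uK z j)).re + 0.9468 * τ) := by
  refine ⟨1 / 4000, by norm_num, fun δ₁ ⟨hδ₁, hδ₁δ⟩ => ?_⟩
  set s₁ := -2 * Real.log (1 - δ₁)
  have hs₁ : 0 < s₁ := neg_two_mul_log_one_sub_pos hδ₁ (by linarith)
  have hA := kernelConst_pos hδ₁ (by linarith)
  refine ⟨(1000 * (Real.pi ^ ((1 : ℝ) / 4) / Real.sqrt 2 * |x| + 1)) ^ 2, by positivity,
    kernelConst δ₁ ^ 2 * ((1 + s₁⁻¹) * (2 * (2 / Real.log 2 + 1))), by positivity, ?_⟩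
  intro N hN ℓ hℓ j τ hτ z hz hzδ₁
  have hs₁z : s₁ ≤ -2 * Real.log ‖z‖ := by linarith [Real.log_le_log (by linarith) hzδ₁]
  set B := kernelConst δ₁ * Real.exp ((PhiF τ (xTau x τ) (uK z j)).re + 0.4734 * τ)
  calc ∑ k, ‖Kz z τ γ (xTau x τ) (uK z j) (uK z (ℓ k))‖ ^ 2
      ≤ B ^ 2 * ∑ k, ((-(uK z (ℓ k)).re) ^ 2)⁻¹ :=
        sum_sq_le_of_le_div _ (fun _ _ => norm_nonneg _)
          fun k _ => norm_Kz_xTau_uK_le hδ₁ hz hzδ₁ hτ j (ℓ k)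
    _ ≤ B ^ 2 * ((1 + s₁⁻¹) * (2 * ((2 / Real.log 2 + 1) * Real.log N))) := by
        gcongr
        refine (sum_inv_re_uK_sq_le hs₁ hs₁z hℓ).trans ?_
        gcongr
        exact two_add_log_le (by exact_mod_cast hN)
    _ = _ := by
        rw [mul_pow, ← Real.exp_nat_mul]
        ring_nf
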